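/- arXiv:2508.15715 — 2 statements merged into one kernel-verified Lean document; each statement's English description precedes it below -/
import Mathlib

section
/- Let a_0=0 < a_1 < ... < a_k < a_{k+1}=n and d_1,...,d_k ∈ ℤ_{≥0}. Then there is at most one sequence of nonnegative integers (ĥ_0, ĥ_1,...,ĥ_n) with ĥ_0 = ĥ_n = 0, ĥ_{a_i} = d_i for i ∈ [k], and -ĥ_{i-1} + ĥ_i + ĥ_j - ĥ_{j+1} ∈ {0,-1} whenever a_h < i ≤ j < a_{h+1} for some 0 ≤ h ≤ k. -/
/-- Woodward's lifting conditions: `f` is a lifted degree sequence for the degrees `d`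
with respect to the dimension vector `a` (where `a 0 = 0` and `a (last) = n`). -/
def GoodLift (n k : ℕ) (a : Fin (k + 2) → ℕ) (d : Fin k → ℕ) (f : ℕ → ℕ) : Prop :=
  f 0 = 0 ∧ f n = 0 ∧ (∀ i : Fin k, f (a i.succ.castSucc) = d i) ∧
  ∀ h : Fin (k + 1), ∀ i j : ℕ, a h.castSucc < i → i ≤ j → j < a h.succ →
    ((f i : ℤ) - f (i - 1) + f j - f (j + 1) = 0 ∨
      (f i : ℤ) - f (i - 1) + f j - f (j + 1) = -1)

lemma exists_increase (D : ℕ → ℤ) : ∀ t m : ℕ, m ≤ t → D m < D t →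
    ∃ s, m < s ∧ s ≤ t ∧ D (s - 1) < D s := by
  intro t
  induction t with
  | zero =>
    intro m hm h
    interval_cases m
    omega
  | succ t ih =>
    intro m hm h
    rcases Nat.lt_or_ge m (t + 1) with hm' | hm'
    · by_cases hc : D t < D (t + 1)
      · exact ⟨t + 1, hm', le_refl _, by simpa using hc⟩
      · push_neg at hc
        obtain ⟨s, hs1, hs2, hs3⟩ := ih m (by omega) (by omega)
        exact ⟨s, hs1, by omega, hs3⟩
    · have : m = t + 1 := by omega
      subst this
      omega

lemma block_le (m M : ℕ) (f g : ℕ → ℕ)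
    (hfm : f m = g m) (hfM : f M = g M)
    (hf : ∀ i j : ℕ, m < i → i ≤ j → j < M →
      ((f i : ℤ) - f (i - 1) + f j - f (j + 1) = 0 ∨
        (f i : ℤ) - f (i - 1) + f j - f (j + 1) = -1))
    (hg : ∀ i j : ℕ, m < i → i ≤ j → j < M →
      ((g i : ℤ) - g (i - 1) + g j - g (j + 1) = 0 ∨
        (g i : ℤ) - g (i - 1) + g j - g (j + 1) = -1)) :
    ∀ t, m ≤ t → t ≤ M → f t ≤ g t := by
  classical
  by_contra hcon
  push_neg at hcon
  obtain ⟨t₀, hm0, hM0, h0⟩ := hcon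
  set D : ℕ → ℤ := fun t => (f t : ℤ) - g t with hD
  obtain ⟨b, hb, hbmax⟩ := Finset.exists_max_image (Finset.Icc m M) D ⟨t₀, by
    simp [Finset.mem_Icc]; omega⟩
  set S := (Finset.Icc m M).filter (fun t => D t = D b) with hS
  have hSne : S.Nonempty := ⟨b, by simp [hS, hb]⟩
  set t := S.max' hSne with ht
  have htmem := S.max'_mem hSne
  have htIcc : t ∈ Finset.Icc m M := (Finset.mem_filter.mp htmem).1
  have htD : D t = D b := (Finset.mem_filter.mp htmem).2
  have htmax : ∀ s ∈ Finset.Icc m M, D s ≤ D t := by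
    intro s hs; rw [htD]; exact hbmax s hs
  have hmM : m ≤ t ∧ t ≤ M := Finset.mem_Icc.mp htIcc
  have hDm : D m = 0 := by simp [hD, hfm]
  have hDM : D M = 0 := by simp [hD, hfM]
  have hDt0 : 0 < D t := by
    have := hbmax t₀ (by simp [Finset.mem_Icc]; omega)
    have : D t₀ ≤ D t := by rw [htD]; exact hbmax t₀ (by simp [Finset.mem_Icc]; omega)
    have ht0pos : 0 < D t₀ := by simp [hD]; exact_mod_cast h0
    omega
  have hmt : m < t := by
    rcases Nat.lt_or_ge m t with h | h
    · exact h
    · have : m = t := by omega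
      rw [← this] at hDt0; omega
  have htM : t < M := by
    rcases Nat.lt_or_ge t M with h | h
    · exact h
    · have : t = M := by omega
      rw [this] at hDt0; omega
  have hsuccIcc : t + 1 ∈ Finset.Icc m M := by simp [Finset.mem_Icc]; omega
  have hDsucc : D (t + 1) < D t := by
    have hle : D (t + 1) ≤ D t := htmax _ hsuccIcc
    rcases lt_or_eq_of_le hle with h | h
    · exact h
    · exfalso
      have hmemS : t + 1 ∈ S := by
        simp only [hS, Finset.mem_filter]
        exact ⟨hsuccIcc, by rw [h, htD]⟩
      have := S.le_max' _ hmemS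
      omega
  obtain ⟨s, hs1, hs2, hs3⟩ := exists_increase D t m (le_of_lt hmt) (by omega)
  have Hf := hf s t hs1 hs2 htM
  have Hg := hg s t hs1 hs2 htM
  simp only [hD] at hs3 hDsucc
  rcases Hf with Hf | Hf <;> rcases Hg with Hg | Hg <;> omega

lemma block_eq (m M : ℕ) (f g : ℕ → ℕ)
    (hfm : f m = g m) (hfM : f M = g M)
    (hf : ∀ i j : ℕ, m < i → i ≤ j → j < M →
      ((f i : ℤ) - f (i - 1) + f j - f (j + 1) = 0 ∨
        (f i : ℤ) - f (i - 1) + f j - f (j + 1) = -1))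
    (hg : ∀ i j : ℕ, m < i → i ≤ j → j < M →
      ((g i : ℤ) - g (i - 1) + g j - g (j + 1) = 0 ∨
        (g i : ℤ) - g (i - 1) + g j - g (j + 1) = -1)) :
    ∀ t, m ≤ t → t ≤ M → f t = g t := by
  intro t h1 h2
  exact le_antisymm (block_le m M f g hfm hfM hf hg t h1 h2)
    (block_le m M g f hfm.symm hfM.symm hg hf t h1 h2)

/-- Uniqueness of Woodward's lifted degree sequence. -/
theorem lift_unique (n k : ℕ) (a : Fin (k + 2) → ℕ) (d : Fin k → ℕ)
    (hmono : StrictMono a) (h0 : a 0 = 0) (hn : a (Fin.last (k + 1)) = n)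
    (f g : ℕ → ℕ) (hf : GoodLift n k a d f) (hg : GoodLift n k a d g) :
    ∀ i ≤ n, f i = g i := by
  classical
  obtain ⟨hf0, hfn, hfd, hfc⟩ := hf
  obtain ⟨hg0, hgn, hgd, hgc⟩ := hg
  have hends : ∀ j : Fin (k + 2), f (a j) = g (a j) := by
    intro j
    rcases Nat.eq_zero_or_pos j.val with hj | hj
    · have hj0 : j = 0 := Fin.ext hj
      rw [hj0, h0, hf0, hg0]
    · have hjle : j.val ≤ k + 1 := Nat.lt_succ_iff.mp j.isLt
      rcases lt_or_eq_of_le hjle with hj2 | hj2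
      · set i : Fin k := ⟨j.val - 1, by omega⟩ with hi
        have hji : j = i.succ.castSucc := by
          apply Fin.ext
          simp [hi]
          omega
        rw [hji, hfd, hgd]
      · have hjl : j = Fin.last (k + 1) := Fin.ext hj2
        rw [hjl, hn, hfn, hgn]
  intro i hi
  obtain ⟨h, hle, hle2⟩ : ∃ h : Fin (k + 1), a h.castSucc ≤ i ∧ i ≤ a h.succ := by
    set S := Finset.univ.filter (fun h : Fin (k + 1) => a h.castSucc ≤ i) with hS
    have h0S : (0 : Fin (k + 1)) ∈ S := by
      simp only [hS, Finset.mem_filter, Finset.mem_univ, true_and]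
      have hc0 : (0 : Fin (k + 1)).castSucc = (0 : Fin (k + 2)) := rfl
      rw [hc0, h0]
      omega
    have hSne : S.Nonempty := ⟨0, h0S⟩
    set hm := S.max' hSne with hhm
    have hmem := S.max'_mem hSne
    have hle : a hm.castSucc ≤ i := by
      have := Finset.mem_filter.mp hmem
      exact this.2
    by_cases hlast : hm.val = k
    · refine ⟨hm, hle, ?_⟩
      have hsl : hm.succ = Fin.last (k + 1) := Fin.ext (by simp [hlast])
      rw [hsl, hn]
      exact hi
    · by_cases hle2 : i ≤ a hm.succ
      · exact ⟨hm, hle, hle2⟩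
      · exfalso
        push_neg at hle2
        have hlt : hm.val < k := lt_of_le_of_ne (Nat.lt_succ_iff.mp hm.isLt) hlast
        set h' : Fin (k + 1) := ⟨hm.val + 1, by omega⟩ with hh'
        have hcs : h'.castSucc = hm.succ := Fin.ext rfl
        have h'S : h' ∈ S := by
          simp only [hS, Finset.mem_filter, Finset.mem_univ, true_and]
          rw [hcs]
          omega
        have := S.le_max' h' h'S
        rw [← hhm] at this
        have hval : h'.val ≤ hm.val := this
        simp [hh'] at hval
  exact block_eq (a h.castSucc) (a h.succ) f g (hends _) (hends _)
    (hfc h) (hgc h) i hle hle2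
end

section
/- Any sequence of nonnegative integers (ĥ_0,...,ĥ_n) with ĥ_0 = ĥ_n = 0, ĥ_{a_i} = d_i for i ∈ [k] (where 0 = a_0 < a_1 < ... < a_k < a_{k+1} = n), and satisfying -ĥ_{i-1} + ĥ_i + ĥ_j - ĥ_{j+1} ∈ {0,-1} whenever a_h < i ≤ j < a_{h+1}, satisfies ĥ_i ≤ d_1 + ... + d_k for all i. -/
lemma mono_of_step (f : ℕ → ℕ) (i R : ℕ)
    (hδ : ∀ t, i < t → t ≤ R → f (t - 1) ≤ f t) :
    ∀ j, i ≤ j → j ≤ R → f i ≤ f j := by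
  intro j
  induction j with
  | zero =>
    intro h1 _
    have : i = 0 := Nat.le_zero.mp h1
    simp [this]
  | succ j ih =>
    intro h1 h2
    rcases Nat.lt_or_ge i (j + 1) with h | h
    · have hij : i ≤ j := Nat.lt_succ_iff.mp h
      have hjR : j ≤ R := by omega
      have h3 := ih hij hjR
      have h4 := hδ (j + 1) (by omega) h2
      simp only [Nat.add_sub_cancel] at h4
      omega
    · have : i = j + 1 := by omega
      simp [this]

lemma exists_inc (f : ℕ → ℕ) (L : ℕ) :
    ∀ i, L ≤ i → f L < f i → ∃ m, L < m ∧ m ≤ i ∧ f (m - 1) < f m := by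
  intro i
  induction i with
  | zero =>
    intro h1 h2
    have : L = 0 := Nat.le_zero.mp h1
    subst this
    exact absurd h2 (lt_irrefl _)
  | succ i ih =>
    intro h1 h2
    have hLne : L ≠ i + 1 := by
      intro h; subst h; exact absurd h2 (lt_irrefl _)
    have hLi : L ≤ i := by omega
    by_cases hL : f L < f i
    · obtain ⟨m, hm1, hm2, hm3⟩ := ih hLi hL
      exact ⟨m, hm1, hm2.trans (Nat.le_succ i), hm3⟩
    · push_neg at hL
      have hlt : f i < f (i + 1) := lt_of_le_of_lt hL h2
      exact ⟨i + 1, by omega, le_rfl, by simpa using hlt⟩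

lemma interval_bound (f : ℕ → ℕ) (L R : ℕ)
    (H : ∀ i j : ℕ, L < i → i ≤ j → j < R →
      ((f i : ℤ) - f (i - 1) + f j - f (j + 1) = 0 ∨
        (f i : ℤ) - f (i - 1) + f j - f (j + 1) = -1)) :
    ∀ i, L ≤ i → i ≤ R → f i ≤ max (f L) (f R) := by
  intro i hLi hiR
  by_cases hc : f i ≤ f L
  · exact le_max_of_le_left hc
  push_neg at hc
  obtain ⟨m, hm1, hm2, hm3⟩ := exists_inc f L i hLi hc
  have key : ∀ t, i < t → t ≤ R → f (t - 1) ≤ f t := by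
    intro t ht1 ht2
    have h2 : m ≤ t - 1 := by omega
    have h3 : t - 1 < R := by omega
    have hH := H m (t - 1) hm1 h2 h3
    have ht : t - 1 + 1 = t := by omega
    rw [ht] at hH
    have hm3' : (f (m - 1) : ℤ) < f m := by exact_mod_cast hm3
    rcases hH with h | h <;> omega
  have := mono_of_step f i R key R hiR le_rfl
  exact le_max_of_le_right this

/-- Woodward's lifted degree sequence is bounded by `D = Σ dᵢ`. -/
theorem lift_bounded (n k : ℕ) (a : Fin (k + 2) → ℕ) (d : Fin k → ℕ)
    (hmono : StrictMono a) (h0 : a 0 = 0) (hn : a (Fin.last (k + 1)) = n)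
    (f : ℕ → ℕ) (hf : GoodLift n k a d f) :
    ∀ i ≤ n, f i ≤ ∑ j, d j := by
  obtain ⟨h0f, hnf, hd, hcond⟩ := hf
  have hend : ∀ h' : Fin (k + 2), f (a h') ≤ ∑ j, d j := by
    intro h'
    by_cases hz : h'.val = 0
    · have : h' = 0 := Fin.ext hz
      simp [this, h0, h0f]
    · by_cases hl : h'.val = k + 1
      · have : h' = Fin.last (k + 1) := Fin.ext hl
        simp [this, hn, hnf]
      · have hjk : h'.val - 1 < k := by omega
        set j : Fin k := ⟨h'.val - 1, hjk⟩ with hj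
        have : h' = j.succ.castSucc := by
          apply Fin.ext
          simp [Fin.succ, Fin.castSucc, hj]
          omega
        rw [this, hd j]
        exact Finset.single_le_sum (fun _ _ => Nat.zero_le _) (Finset.mem_univ j)
  intro i hi
  classical
  set s : Finset (Fin (k + 2)) := Finset.univ.filter (fun h' => a h' ≤ i) with hs
  have hs0 : (0 : Fin (k + 2)) ∈ s := by simp [hs, h0]
  have hne : s.Nonempty := ⟨0, hs0⟩
  set m := s.max' hne with hm
  have hma : a m ≤ i := by
    have := s.max'_mem hne
    simpa [hs] using this
  by_cases hml : m.val = k + 1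
  · have hmeq : m = Fin.last (k + 1) := Fin.ext hml
    rw [hmeq, hn] at hma
    have : i = n := le_antisymm hi hma
    rw [this, hnf]
    exact Nat.zero_le _
  · have hlt : m.val < k + 1 := lt_of_le_of_ne (Nat.lt_succ_iff.mp m.isLt) hml
    set h : Fin (k + 1) := ⟨m.val, hlt⟩ with hh
    have hcastm : h.castSucc = m := by apply Fin.ext; simp [hh]
    have hiR : i < a h.succ := by
      by_contra hcon
      push_neg at hcon
      have hmem : h.succ ∈ s := by simp [hs, hcon]
      have hle := s.le_max' h.succ hmem
      have : m.val + 1 ≤ m.val := by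
        simpa [Fin.le_def, hh, ← hm] using hle
      omega
    have hb := interval_bound f (a h.castSucc) (a h.succ) (hcond h) i
      (by rw [hcastm]; exact hma) (le_of_lt hiR)
    exact hb.trans (max_le (hend h.castSucc) (hend h.succ))
end
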